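/- arXiv:2601.22345 — 5 statements merged into one kernel-verified Lean document; each statement's English description precedes it below -/
import Mathlib

section
/- Let 0 < c ≤ 1 and 0 < α < 1 be real numbers, and let q(x) = c·x^α for x ≥ 0. Then for every integer p ≥ 2 there exists v_p ∈ (0,1] such that for every x ∈ (0,1): the inequality 1 − (1 − q(x/p))^p > q(x) holds if and only if x < v_p. -/
/-!
With `t = q (x / p)` one has `q x = p ^ α * t` and `1 - (1 - t) ^ p = t * ∑ i < p, (1 - t) ^ i`,
so the inequality says `∑ i < p, (1 - t) ^ i > p ^ α`. On `[0, 1]` this sum decreases strictly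
from `p` to `1`, and `1 < p ^ α < p`, so it holds exactly for `t` below some `s ∈ (0, 1)`.
Since `t = c * (x / p) ^ α ≤ 1` increases with `x`, that means `x < p * (s / c) ^ α⁻¹`.
-/

open Finset Set

theorem exists_lt_iff_lt_of_strictAntiOn {f : ℝ → ℝ} {a b k : ℝ} (hab : a ≤ b)
    (hcont : ContinuousOn f (Icc a b)) (hanti : StrictAntiOn f (Icc a b))
    (hb : f b < k) (ha : k < f a) :
    ∃ s ∈ Ioo a b, ∀ t ∈ Icc a b, k < f t ↔ t < s := by
  obtain ⟨s, hs, rfl⟩ := intermediate_value_Ioo' hab hcont ⟨hb, ha⟩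
  exact ⟨s, hs, fun t ht => hanti.lt_iff_gt (Set.Ioo_subset_Icc_self hs) ht⟩

theorem one_sub_one_sub_pow_eq_mul_geom_sum {R : Type*} [CommRing R] (t : R) (n : ℕ) :
    1 - (1 - t) ^ n = t * ∑ i ∈ range n, (1 - t) ^ i := by
  simpa using (mul_neg_geom_sum (1 - t) n).symm

theorem strictAntiOn_geom_sum_one_sub {n : ℕ} (hn : 2 ≤ n) :
    StrictAntiOn (fun t : ℝ => ∑ i ∈ range n, (1 - t) ^ i) (Icc 0 1) := by
  intro a _ b hb hab
  refine sum_lt_sum (fun i _ => pow_le_pow_left₀ (by linarith [hb.2]) (by linarith) i)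
    ⟨1, mem_range.2 hn, by simpa using hab⟩

theorem power_law_lt_iff {c α p x s : ℝ} (hc : 0 < c) (hα : 0 < α) (hp : 0 < p)
    (hx : 0 ≤ x) (hs : 0 ≤ s) :
    c * (x / p) ^ α < s ↔ x < p * (s / c) ^ α⁻¹ := by
  rw [← lt_div_iff₀' hc, ← Real.lt_rpow_inv_iff_of_pos (by positivity) (by positivity) hα,
    div_lt_iff₀' hp]

/-- Parallelization under a sublinear power law: for `q x = c * x ^ α` with
`0 < c ≤ 1` and `0 < α < 1`, for every integer `p ≥ 2` there is a threshold
`v_p ∈ (0,1]` such that for every `x ∈ (0,1)`, splitting the budget into `p`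
parallel threads is beneficial iff `x < v_p`. -/
theorem parallelization_sublinear_power_law
    (c α : ℝ) (hc0 : 0 < c) (hc1 : c ≤ 1) (hα0 : 0 < α) (hα1 : α < 1)
    (q : ℝ → ℝ) (hq : ∀ x : ℝ, q x = c * x ^ α) :
    ∀ p : ℕ, 2 ≤ p → ∃ v : ℝ, v ∈ Set.Ioc (0 : ℝ) 1 ∧
      ∀ x ∈ Set.Ioo (0 : ℝ) 1,
        (1 - (1 - q (x / (p : ℝ))) ^ p > q x ↔ x < v) := by
  intro p hp
  have hp1 : (1 : ℝ) < p := by exact_mod_cast hp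
  have hp0 : (0 : ℝ) < p := by linarith
  obtain ⟨s, ⟨hs0, -⟩, hs⟩ := exists_lt_iff_lt_of_strictAntiOn (k := (p : ℝ) ^ α)
    zero_le_one (by fun_prop) (strictAntiOn_geom_sum_one_sub hp)
    (by simpa [show p ≠ 0 by omega] using Real.one_lt_rpow hp1 hα0)
    (by simpa using Real.rpow_lt_rpow_of_exponent_lt hp1 hα1 |>.trans_eq (Real.rpow_one _))
  refine ⟨min 1 (p * (s / c) ^ α⁻¹), ⟨lt_min one_pos (by positivity), min_le_left _ _⟩, ?_⟩
  rintro x ⟨hx0, hx1⟩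
  set t := c * (x / p) ^ α
  have ht0 : 0 < t := by positivity
  have ht1 : t ≤ 1 := mul_le_one₀ hc1 (by positivity)
    (Real.rpow_le_one (by positivity) ((div_le_one hp0).2 (by linarith)) hα0.le)
  have hqx : q x = (p : ℝ) ^ α * t := by
    rw [hq, mul_left_comm, ← Real.mul_rpow hp0.le (by positivity), mul_div_cancel₀ _ hp0.ne']
  rw [hq (x / p), hqx, one_sub_one_sub_pow_eq_mul_geom_sum, gt_iff_lt, mul_comm _ t,
    mul_lt_mul_iff_right₀ ht0, hs t ⟨ht0.le, ht1⟩, power_law_lt_iff hc0 hα0 hp0 hx0.le hs0.le,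
    lt_min_iff, and_iff_right hx1]
end

section
/- For every integer p ≥ 2 and every real α ∈ (0,1), there exists a unique y* ∈ (0,1) such that 1 − (1 − y*)^p = p^α · y*; moreover, for every y ∈ (0,1], the inequality 1 − (1 − y)^p > p^α · y holds if y < y*, and 1 − (1 − y)^p < p^α · y holds if y* < y ≤ 1. -/
/-!
Dividing by `y`, the benefit condition compares `p ^ α` with the geometric sum
`∑ k < p, (1 - y) ^ k`, which decreases strictly from `p` at `y = 0` to `1` at `y = 1`.
Since `1 < p ^ α < p`, it crosses the level `p ^ α` exactly once.
-/

open Finset Set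

/-- `(1 - (1 - y) ^ p) / y`, written as a polynomial so that it is also defined at `y = 0`. -/
noncomputable def parallelGain (p : ℕ) (y : ℝ) : ℝ := ∑ k ∈ range p, (1 - y) ^ k

lemma geom_sum_strictMonoOn {R : Type*} [Semiring R] [PartialOrder R] [IsStrictOrderedRing R]
    {n : ℕ} (hn : 2 ≤ n) : StrictMonoOn (fun x : R => ∑ i ∈ range n, x ^ i) (Ici 0) := by
  intro x hx y _ hxy
  refine Finset.sum_lt_sum (fun i _ => pow_le_pow_left₀ hx hxy.le i) ⟨1, ?_, ?_⟩
  · exact mem_range.2 hn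
  · simpa using hxy

lemma one_sub_one_sub_pow_eq_mul_parallelGain (p : ℕ) (y : ℝ) :
    1 - (1 - y) ^ p = y * parallelGain p y := by
  rw [parallelGain, ← mul_neg_geom_sum, sub_sub_cancel]

lemma continuous_parallelGain (p : ℕ) : Continuous (parallelGain p) := by
  unfold parallelGain
  fun_prop

lemma parallelGain_zero (p : ℕ) : parallelGain p 0 = p := by
  simp [parallelGain]

lemma parallelGain_one {p : ℕ} (hp : p ≠ 0) : parallelGain p 1 = 1 := by
  simp [parallelGain, hp]

lemma strictAntiOn_parallelGain {p : ℕ} (hp : 2 ≤ p) : StrictAntiOn (parallelGain p) (Icc 0 1) :=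
  fun _ ha _ hb hab => geom_sum_strictMonoOn hp (sub_nonneg.2 hb.2) (sub_nonneg.2 ha.2)
    (sub_lt_sub_left hab 1)

lemma mul_lt_one_sub_one_sub_pow_iff {p : ℕ} {y : ℝ} (hy : 0 < y) (c : ℝ) :
    c * y < 1 - (1 - y) ^ p ↔ c < parallelGain p y := by
  rw [one_sub_one_sub_pow_eq_mul_parallelGain, mul_comm y, mul_lt_mul_iff_of_pos_right hy]

lemma one_sub_one_sub_pow_lt_mul_iff {p : ℕ} {y : ℝ} (hy : 0 < y) (c : ℝ) :
    1 - (1 - y) ^ p < c * y ↔ parallelGain p y < c := by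
  rw [one_sub_one_sub_pow_eq_mul_parallelGain, mul_comm y, mul_lt_mul_iff_of_pos_right hy]

lemma one_sub_one_sub_pow_eq_mul_iff {p : ℕ} {y : ℝ} (hy : 0 < y) (c : ℝ) :
    1 - (1 - y) ^ p = c * y ↔ parallelGain p y = c := by
  rw [one_sub_one_sub_pow_eq_mul_parallelGain, mul_comm y, mul_left_inj' hy.ne']

/-- For every integer `p ≥ 2` and real `α ∈ (0,1)` there is a unique
`y* ∈ (0,1)` with `1 - (1 - y*)^p = p^α * y*`; moreover, for every
`y ∈ (0,1]`, we have `1 - (1 - y)^p > p^α * y` when `y < y*` and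
`1 - (1 - y)^p < p^α * y` when `y* < y ≤ 1`. -/
theorem benefit_crossing_point
    (p : ℕ) (hp : 2 ≤ p) (α : ℝ) (hα : α ∈ Set.Ioo (0 : ℝ) 1) :
    ∃ ystar ∈ Set.Ioo (0 : ℝ) 1,
      (1 - (1 - ystar) ^ p = (p : ℝ) ^ α * ystar) ∧
      (∀ y ∈ Set.Ioo (0 : ℝ) 1, 1 - (1 - y) ^ p = (p : ℝ) ^ α * y → y = ystar) ∧
      (∀ y ∈ Set.Ioc (0 : ℝ) 1,
        (y < ystar → 1 - (1 - y) ^ p > (p : ℝ) ^ α * y) ∧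
        (ystar < y → 1 - (1 - y) ^ p < (p : ℝ) ^ α * y)) := by
  have hp1 : (1 : ℝ) < p := by exact_mod_cast hp
  have hc : (p : ℝ) ^ α ∈ Ioo (parallelGain p 1) (parallelGain p 0) := by
    rw [parallelGain_one (by omega), parallelGain_zero]
    exact ⟨Real.one_lt_rpow hp1 hα.1, by simpa using Real.rpow_lt_rpow_of_exponent_lt hp1 hα.2⟩
  obtain ⟨ystar, hys, hgain⟩ :=
    intermediate_value_Ioo' zero_le_one (continuous_parallelGain p).continuousOn hc
  have hanti := strictAntiOn_parallelGain hp
  have hys' : ystar ∈ Icc (0 : ℝ) 1 := Ioo_subset_Icc_self hys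
  refine ⟨ystar, hys, (one_sub_one_sub_pow_eq_mul_iff hys.1 _).2 hgain, fun y hy hyc => ?_,
    fun y hy => ⟨fun hlt => ?_, fun hgt => ?_⟩⟩
  · refine hanti.injOn (Ioo_subset_Icc_self hy) hys' ?_
    rw [hgain, ← one_sub_one_sub_pow_eq_mul_iff hy.1, hyc]
  · rw [gt_iff_lt, mul_lt_one_sub_one_sub_pow_iff hy.1, ← hgain]
    exact hanti ⟨hy.1.le, hy.2⟩ hys' hlt
  · rw [one_sub_one_sub_pow_lt_mul_iff hy.1, ← hgain]
    exact hanti hys' ⟨hy.1.le, hy.2⟩ hgt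
end

section
/- Let h : ℝ → ℝ be continuous on [0,1] and strictly concave on [0,1], with h(0) = 0, h(1) < 0, and suppose h has a right derivative at 0 (i.e., a derivative within [0,∞) at 0) that is strictly positive. Then there exists a unique y* ∈ (0,1) with h(y*) = 0, and moreover h(y) > 0 for all y ∈ (0, y*) and h(y) < 0 for all y ∈ (y*, 1]. -/
/-!
The positive right derivative at `0` gives a point `x ∈ (0,1)` with `h x > 0`, and the
intermediate value theorem on `[x, 1]` gives a zero `y*`. A strictly concave function is
strictly above the minimum of its values at the ends of any open segment; with the zeros
`0` and `y*` as ends this gives `h > 0` on `(0, y*)`, and with `x` and a point of `(y*, 1]`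
as ends it rules out `h ≥ 0` there.
-/

open Set Filter Topology

theorem HasDerivWithinAt.eventually_lt_of_deriv_pos {f : ℝ → ℝ} {f' a : ℝ}
    (hf : HasDerivWithinAt f f' (Ici a) a) (hf' : 0 < f') : ∀ᶠ x in 𝓝[>] a, f a < f x := by
  have hslope : Tendsto (slope f a) (𝓝[>] a) (𝓝 f') :=
    (hasDerivWithinAt_iff_tendsto_slope' self_notMem_Ioi).mp hf.Ioi_of_Ici
  filter_upwards [hslope.eventually (lt_mem_nhds hf'), self_mem_nhdsWithin] with x hx hax
  exact (slope_pos_iff_of_le (le_of_lt hax)).mp hx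

section StrictConcave

variable {𝕜 : Type*} [Field 𝕜] [LinearOrder 𝕜] [IsStrictOrderedRing 𝕜]
  {s : Set 𝕜} {f : 𝕜 → 𝕜} {x y z : 𝕜}

theorem StrictConcaveOn.pos_of_mem_Ioo (hf : StrictConcaveOn 𝕜 s f) (hx : x ∈ s) (hz : z ∈ s)
    (hfx : 0 ≤ f x) (hfz : 0 ≤ f z) (hy : y ∈ Ioo x z) : 0 < f y := by
  have hseg : y ∈ openSegment 𝕜 x z := by rwa [openSegment_eq_Ioo (hy.1.trans hy.2)]
  exact (le_min hfx hfz).trans_lt (hf.lt_on_openSegment hx hz (hy.1.trans hy.2).ne hseg)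

theorem StrictConcaveOn.neg_of_nonpos_of_mem_Ioo (hf : StrictConcaveOn 𝕜 s f) (hx : x ∈ s)
    (hz : z ∈ s) (hfx : 0 ≤ f x) (hfy : f y ≤ 0) (hy : y ∈ Ioo x z) : f z < 0 := by
  by_contra! hfz
  exact hfy.not_gt (hf.pos_of_mem_Ioo hx hz hfx hfz hy)

end StrictConcave

/-- Sign-change lemma: a function continuous and strictly concave on `[0,1]`,
vanishing at `0`, negative at `1`, with strictly positive right derivative at
`0`, has a unique zero `y* ∈ (0,1)`; it is positive on `(0, y*)` and negative
on `(y*, 1]`. -/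
theorem strictConcave_sign_change
    (h : ℝ → ℝ)
    (hcont : ContinuousOn h (Set.Icc (0 : ℝ) 1))
    (hconc : StrictConcaveOn ℝ (Set.Icc (0 : ℝ) 1) h)
    (h0 : h 0 = 0) (h1 : h 1 < 0)
    (d : ℝ) (hd : 0 < d) (hderiv : HasDerivWithinAt h d (Set.Ici (0 : ℝ)) 0) :
    ∃ ystar ∈ Set.Ioo (0 : ℝ) 1, h ystar = 0 ∧
      (∀ y ∈ Set.Ioo (0 : ℝ) 1, h y = 0 → y = ystar) ∧
      (∀ y ∈ Set.Ioo (0 : ℝ) ystar, 0 < h y) ∧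
      (∀ y ∈ Set.Ioc ystar 1, h y < 0) := by
  obtain ⟨x, hhx, hx0, hx1⟩ :=
    ((hderiv.eventually_lt_of_deriv_pos hd).and (Ioo_mem_nhdsGT one_pos)).exists
  rw [h0] at hhx
  obtain ⟨ystar, ⟨hxy, hy1⟩, hy0⟩ :=
    intermediate_value_Ioo' hx1.le (hcont.mono (Icc_subset_Icc hx0.le le_rfl)) ⟨h1, hhx⟩
  have hy0' : 0 < ystar := hx0.trans hxy
  have hpos : ∀ y ∈ Ioo 0 ystar, 0 < h y := fun y hy =>
    hconc.pos_of_mem_Ioo ⟨le_rfl, zero_le_one⟩ ⟨hy0'.le, hy1.le⟩ h0.ge hy0.ge hy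
  have hneg : ∀ y ∈ Ioc ystar 1, h y < 0 := fun y hy =>
    hconc.neg_of_nonpos_of_mem_Ioo ⟨hx0.le, hx1.le⟩ ⟨hy0'.le.trans hy.1.le, hy.2⟩ hhx.le hy0.le
      ⟨hxy, hy.1⟩
  refine ⟨ystar, ⟨hy0', hy1⟩, hy0, fun y hy hzero => ?_, hpos, hneg⟩
  rcases lt_trichotomy y ystar with hlt | heq | hgt
  · exact absurd hzero (hpos y ⟨hy.1, hlt⟩).ne'
  · exact heq
  · exact absurd hzero (hneg y ⟨hgt, hy.2.le⟩).ne
end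

section
/- Let 0 < c ≤ 1 and 0 < α < 1 be real numbers. Then for every real x > 0, the inequality 1 − (1 − c·(x/2)^α)^2 > c·x^α holds if and only if x < 2·((2 − 2^α)/c)^(1/α). -/
/-- For `0 < c ≤ 1`, `0 < α < 1` and every `x > 0`, splitting the budget `x`
into two threads is beneficial, i.e. `1 - (1 - c*(x/2)^α)^2 > c*x^α`, iff
`x < 2*((2 - 2^α)/c)^(1/α)`. -/
theorem two_thread_threshold
    (c α : ℝ) (hc0 : 0 < c) (hc1 : c ≤ 1) (hα0 : 0 < α) (hα1 : α < 1)
    (x : ℝ) (hx : 0 < x) :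
    1 - (1 - c * (x / 2) ^ α) ^ 2 > c * x ^ α ↔
      x < 2 * ((2 - (2 : ℝ) ^ α) / c) ^ (1 / α) := by
  set t := x / 2 with ht_def
  have ht : 0 < t := by positivity
  have h2a : (2 : ℝ) ^ α < 2 := by
    calc (2:ℝ) ^ α < 2 ^ (1:ℝ) := Real.rpow_lt_rpow_of_exponent_lt one_lt_two hα1
    _ = 2 := Real.rpow_one 2
  have hK : 0 < 2 - (2:ℝ) ^ α := by linarith
  have hq : 0 < c * t ^ α := by positivity
  have hxt : x = 2 * t := by rw [ht_def]; ring
  have hxa : x ^ α = 2 ^ α * t ^ α := by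
    rw [hxt, Real.mul_rpow (by norm_num) ht.le]
  have step1 : 1 - (1 - c * t ^ α) ^ 2 > c * x ^ α ↔ c * t ^ α < 2 - (2:ℝ) ^ α := by
    rw [hxa]
    constructor
    · intro h; nlinarith [sq_nonneg (c * t ^ α)]
    · intro h; nlinarith
  rw [step1, mul_comm c (t ^ α), ← lt_div_iff₀ hc0]
  rw [show (1:ℝ)/α = α⁻¹ by rw [one_div]]
  rw [← Real.lt_rpow_inv_iff_of_pos ht.le (by positivity) hα0]
  rw [hxt]
  constructor <;> intro h <;> linarith
end

section
/- Fix a real constant c with 0 < c ≤ 1 and define v₂(α) = 2·((2 − 2^α)/c)^(1/α) for α ∈ (0,1), using real powers. Then c·v₂(α)/(1 − α) tends to 4·log 2 as α tends to 1 from the left, where log denotes the natural logarithm. -/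
/-!
Writing `x = (2 - 2^α)/c`, the quantity is `2 · (2 - 2^α)/(1 - α) · x^((1 - α)/α)`. The first
factor tends to `2 · (d/dα) 2^α |_{α=1} = 2 log 2`. For the second, `x = (1 - α) · s` with `s`
tending to a positive limit, so `x^((1 - α)/α)` is governed by `(1 - α)^(1 - α) → 1` and tends to `1`.
-/

open Real Filter Set Topology

theorem tendsto_rpow_self_nhdsGT_zero : Tendsto (fun x : ℝ => x ^ x) (𝓝[>] 0) (𝓝 1) := by
  have h := (continuous_exp.tendsto 0).comp (tendsto_log_mul_rpow_nhdsGT_zero zero_lt_one)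
  rw [exp_zero] at h
  refine h.congr' (eventually_mem_nhdsWithin.mono fun x hx => ?_)
  simp [rpow_def_of_pos (mem_Ioi.mp hx)]

theorem tendsto_mul_rpow_mul_of_tendsto_nhdsGT_zero {ι : Type*} {l : Filter ι} {u r k : ι → ℝ}
    {L K : ℝ} (hu : Tendsto u l (𝓝[>] 0)) (hr : Tendsto r l (𝓝 L)) (hL : 0 < L)
    (hk : Tendsto k l (𝓝 K)) :
    Tendsto (fun t => (u t * r t) ^ (u t * k t)) l (𝓝 1) := by
  have hself : Tendsto (fun t => (u t ^ u t) ^ k t) l (𝓝 1) := by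
    simpa using (tendsto_rpow_self_nhdsGT_zero.comp hu).rpow hk (Or.inl one_ne_zero)
  have hrest : Tendsto (fun t => r t ^ (u t * k t)) l (𝓝 1) := by
    simpa using hr.rpow ((tendsto_nhds_of_tendsto_nhdsWithin hu).mul hk) (Or.inl hL.ne')
  refine (mul_one (1 : ℝ) ▸ hself.mul hrest).congr' ?_
  filter_upwards [hu self_mem_nhdsWithin, hr.eventually (lt_mem_nhds hL)] with t (ht : 0 < u t) hrt
  rw [mul_rpow ht.le hrt.le, rpow_mul ht.le]

theorem tendsto_two_sub_two_rpow_div_one_sub :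
    Tendsto (fun α : ℝ => (2 - 2 ^ α) / (1 - α)) (𝓝[<] 1) (𝓝 (2 * log 2)) := by
  have hderiv : HasDerivAt (fun x : ℝ => (2 : ℝ) ^ x) (2 * log 2) 1 := by
    simpa using (hasStrictDerivAt_const_rpow two_pos 1).hasDerivAt
  refine ((hasDerivAt_iff_tendsto_slope.mp hderiv).mono_left
    (nhdsLT_le_nhdsNE 1)).congr fun α => ?_
  rw [slope_def_field, rpow_one, ← neg_div_neg_eq, neg_sub, neg_sub]

theorem tendsto_const_sub_nhdsLT (a : ℝ) : Tendsto (fun x : ℝ => a - x) (𝓝[<] a) (𝓝[>] 0) := by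
  refine tendsto_nhdsWithin_of_tendsto_nhds_of_eventually_within _ ?_ ?_
  · have h : Tendsto (fun x : ℝ => a - x) (𝓝 a) (𝓝 (a - a)) := tendsto_const_nhds.sub tendsto_id
    simpa using h.mono_left nhdsWithin_le_nhds
  · filter_upwards [self_mem_nhdsWithin] with x (hx : x < a)
    exact sub_pos.mpr hx

theorem rpow_one_div_eq_mul_rpow {x α : ℝ} (hx : 0 < x) (hα : α ≠ 0) :
    x ^ (1 / α) = x * x ^ ((1 - α) / α) := by
  have hexp : 1 / α = 1 + (1 - α) / α := by field_simp; ring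
  rw [hexp, rpow_add hx, rpow_one]

theorem budget_threshold_asymptotics_general
    (c : ℝ) (hc0 : 0 < c) :
    Filter.Tendsto
      (fun α : ℝ => c * (2 * ((2 - (2 : ℝ) ^ α) / c) ^ (1 / α)) / (1 - α))
      (nhdsWithin (1 : ℝ) (Set.Iio (1 : ℝ))) (nhds (4 * Real.log 2)) := by
  have hslope := tendsto_two_sub_two_rpow_div_one_sub
  have hpow := tendsto_mul_rpow_mul_of_tendsto_nhdsGT_zero (tendsto_const_sub_nhdsLT 1)
    (hslope.div_const c) (by positivity)
    ((continuousAt_inv₀ one_ne_zero).tendsto.mono_left nhdsWithin_le_nhds)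
  convert ((hslope.const_mul 2).mul hpow).congr' ?_ using 2
  · ring
  filter_upwards [Ioo_mem_nhdsLT (show (0 : ℝ) < 1 by norm_num)] with α ⟨hα0, hα1⟩
  have h2α : 0 < 2 - (2 : ℝ) ^ α := by
    simpa using rpow_lt_rpow_of_exponent_lt one_lt_two hα1
  have h1α : 1 - α ≠ 0 := (sub_pos.mpr hα1).ne'
  rw [rpow_one_div_eq_mul_rpow (div_pos h2α hc0) hα0.ne']
  field_simp

/-- For fixed `0 < c ≤ 1`, with `v₂(α) = 2*((2 - 2^α)/c)^(1/α)`, the quantity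
`c * v₂(α) / (1 - α)` tends to `4 * log 2` as `α → 1⁻`. -/
theorem budget_threshold_asymptotics
    (c : ℝ) (hc0 : 0 < c) (hc1 : c ≤ 1) :
    Filter.Tendsto
      (fun α : ℝ => c * (2 * ((2 - (2 : ℝ) ^ α) / c) ^ (1 / α)) / (1 - α))
      (nhdsWithin (1 : ℝ) (Set.Iio (1 : ℝ))) (nhds (4 * Real.log 2)) :=
  budget_threshold_asymptotics_general c hc0
end
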